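/- arXiv:2602.22109 — 4 statements merged into one kernel-verified Lean document; each statement's English description precedes it below -/
import Mathlib

section
/- Let d ≥ 1, let x ∈ ℝ^d, let 0 ≤ r₁ ≤ r₂ and c ∈ [0,1]. Then B_{r₁}(o) ∩ B_{r₂}(x) ⊆ B_{r₁}(o) ∩ B_{r₂}(c·x), where o denotes the origin of ℝ^d. -/
/-- overlap monotonicity. For `x ∈ ℝ^d`, `0 ≤ r₁ ≤ r₂` and `c ∈ [0,1]`,
`B_{r₁}(o) ∩ B_{r₂}(x) ⊆ B_{r₁}(o) ∩ B_{r₂}(c·x)`. -/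
theorem overlap_monotonicity (d : ℕ) (hd : 1 ≤ d)
    (x : EuclideanSpace ℝ (Fin d)) (r₁ r₂ : ℝ) (hr₁ : 0 ≤ r₁) (hr₁₂ : r₁ ≤ r₂)
    (c : ℝ) (hc₀ : 0 ≤ c) (hc₁ : c ≤ 1) :
    Metric.ball (0 : EuclideanSpace ℝ (Fin d)) r₁ ∩ Metric.ball x r₂ ⊆
      Metric.ball (0 : EuclideanSpace ℝ (Fin d)) r₁ ∩ Metric.ball (c • x) r₂ := by
  rintro z ⟨hz1, hz2⟩
  refine ⟨hz1, ?_⟩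
  rw [Metric.mem_ball, dist_eq_norm] at *
  simp only [sub_zero] at hz1
  have key : z - c • x = c • (z - x) + (1 - c) • z := by
    rw [smul_sub, sub_smul, one_smul]; abel
  have h1 : ‖z - c • x‖ ≤ c * ‖z - x‖ + (1 - c) * ‖z‖ := by
    rw [key]
    refine (norm_add_le _ _).trans ?_
    rw [norm_smul, norm_smul, Real.norm_eq_abs, Real.norm_eq_abs,
      abs_of_nonneg hc₀, abs_of_nonneg (by linarith)]
  have h2 : c * ‖z - x‖ + (1 - c) * ‖z‖ < r₂ := by
    rcases eq_or_lt_of_le hc₀ with h | h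
    · rw [← h]; simpa using hz1.trans_le hr₁₂
    · nlinarith [mul_lt_mul_of_pos_left hz2 h,
        mul_le_mul_of_nonneg_left hz1.le (by linarith : (0:ℝ) ≤ 1 - c)]
  linarith
end

section
/- Let d ≥ 1, let A ⊆ ℝ^d be any set, let r ≥ 0 and c ∈ [0,1]. Then B_r(o) ∩ B_r(A) ⊆ B_r(o) ∩ B_r(c·A), where c·A := {c·a : a ∈ A}. -/
open Pointwise

/-- The open `r`-thickening of a set `A ⊆ ℝ^d`. -/
def thick {d : ℕ} (r : ℝ) (A : Set (EuclideanSpace ℝ (Fin d))) :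
    Set (EuclideanSpace ℝ (Fin d)) :=
  {x | ∃ a ∈ A, dist x a < r}

/-- For any `A ⊆ ℝ^d`, `r ≥ 0` and `c ∈ [0,1]`,
`B_r(o) ∩ B_r(A) ⊆ B_r(o) ∩ B_r(c·A)`. -/
theorem ball_inter_thickening_subset_dilation (d : ℕ) (hd : 1 ≤ d)
    (A : Set (EuclideanSpace ℝ (Fin d))) (r : ℝ) (hr : 0 ≤ r)
    (c : ℝ) (hc₀ : 0 ≤ c) (hc₁ : c ≤ 1) :
    Metric.ball (0 : EuclideanSpace ℝ (Fin d)) r ∩ thick r A ⊆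
      Metric.ball (0 : EuclideanSpace ℝ (Fin d)) r ∩ thick r (c • A) := by
  rintro x ⟨hx, a, ha, hxa⟩
  refine ⟨hx, c • a, Set.smul_mem_smul_set ha, ?_⟩
  have hx' : ‖x‖ < r := by simpa using hx
  have hxa' : ‖x - a‖ < r := by rwa [dist_eq_norm] at hxa
  rw [dist_eq_norm]
  have key : x - c • a = c • (x - a) + (1 - c) • x := by
    rw [smul_sub, sub_smul, one_smul]; abel
  calc ‖x - c • a‖ = ‖c • (x - a) + (1 - c) • x‖ := by rw [key]
    _ ≤ ‖c • (x - a)‖ + ‖(1 - c) • x‖ := norm_add_le _ _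
    _ = c * ‖x - a‖ + (1 - c) * ‖x‖ := by
        rw [norm_smul, norm_smul, Real.norm_of_nonneg hc₀,
          Real.norm_of_nonneg (by linarith)]
    _ < c * r + (1 - c) * r := by
        rcases eq_or_lt_of_le hc₀ with h0 | h0
        · rcases eq_or_lt_of_le hc₁ with h1 | h1
          · exact absurd (h0.trans h1) zero_ne_one
          · simp only [← h0, zero_mul, zero_add]
            exact mul_lt_mul_of_pos_left hx' (by linarith)
        · rcases eq_or_lt_of_le hc₁ with h1 | h1
          · simp only [h1, one_mul, sub_self, zero_mul, add_zero]; exact hxa'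
          · exact add_lt_add (mul_lt_mul_of_pos_left hxa' h0)
              (mul_lt_mul_of_pos_left hx' (by linarith))
    _ = r := by ring
end

section
/- Let d ≥ 1, let A ⊆ ℝ^d be a finite set, let r > 0 and c ∈ [0,1]. Then the Lebesgue volume of the r-thickening of the dilated set is at most the Lebesgue volume of the r-thickening of the set itself: |B_r(c·A)| ≤ |B_r(A)|. -/
open Pointwise

open MeasureTheory

/-!
Cut `B_r(c·A)` into the Voronoi cells of the points `c·a`, `a ∈ A`, and translate the cell of
`c·a` by `(1 - c)·a`. A point at distance `< r` from `c·a` lands at distance `< r` from `a`, so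
every translated cell lies in `B_r(A)`. For `0 < c < 1` the translated cells are pairwise
disjoint, because Voronoi cells are monotone: if `x` is nearer to `p` than to `q` and `y` is
nearer to `q` than to `p`, then `⟪x - y, p - q⟫ ≥ 0`, whereas two points of the translated cells
of `a ≠ b` that coincide would give `⟪x - y, c·a - c·b⟫ = -c (1 - c) ‖a - b‖² < 0`.
Translations preserve volume, hence `|B_r(c·A)| ≤ ∑ |cell| = |⋃ translated cells| ≤ |B_r(A)|`.
-/

open Set Metric Function

theorem MeasureTheory.measure_le_of_pairwise_disjoint_vadd {G α ι : Type*} [AddGroup G]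
    [AddAction G α] [MeasurableSpace α] [MeasurableConstVAdd G α] [Countable ι]
    (μ : Measure α) [VAddInvariantMeasure G α μ] {s t : Set α} {S : ι → Set α} (v : ι → G)
    (hS : ∀ i, MeasurableSet (S i)) (hcover : s ⊆ ⋃ i, S i)
    (hdisj : Pairwise (Disjoint on fun i => v i +ᵥ S i)) (hsub : ∀ i, v i +ᵥ S i ⊆ t) :
    μ s ≤ μ t :=
  calc μ s ≤ μ (⋃ i, S i) := measure_mono hcover
    _ ≤ ∑' i, μ (S i) := measure_iUnion_le S
    _ = ∑' i, μ (v i +ᵥ S i) := by simp only [measure_vadd]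
    _ = μ (⋃ i, v i +ᵥ S i) := (measure_iUnion hdisj fun i => (hS i).const_vadd (v i)).symm
    _ ≤ μ t := measure_mono (iUnion_subset hsub)

section Voronoi

variable {X : Type*} [PseudoMetricSpace X]

def voronoiCell (A : Set X) (p : X) : Set X :=
  {x | ∀ q ∈ A, dist x p ≤ dist x q}

theorem isClosed_voronoiCell (A : Set X) (p : X) : IsClosed (voronoiCell A p) := by
  simp only [voronoiCell, ofPred_forall]
  exact isClosed_biInter fun q _ =>
    isClosed_le (continuous_id.dist continuous_const) (continuous_id.dist continuous_const)

theorem exists_mem_voronoiCell {A : Set X} (hA : A.Finite) (hne : A.Nonempty) (x : X) :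
    ∃ p ∈ A, x ∈ voronoiCell A p :=
  A.exists_min_image (dist x) hA hne

theorem dist_lt_of_mem_thickening_of_mem_voronoiCell {A : Set X} {p x : X} {r : ℝ}
    (hx : x ∈ thickening r A) (hp : x ∈ voronoiCell A p) : dist x p < r := by
  obtain ⟨q, hq, hxq⟩ := mem_thickening_iff.mp hx
  exact (hp q hq).trans_lt hxq

end Voronoi

section Dilation

variable {E : Type*} [NormedAddCommGroup E] [InnerProductSpace ℝ E]

theorem inner_sub_sub_nonneg_of_dist_le {x y p q : E} (hx : dist x p ≤ dist x q)
    (hy : dist y q ≤ dist y p) : 0 ≤ inner ℝ (x - y) (p - q) := by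
  rw [dist_eq_norm, dist_eq_norm, ← sq_le_sq₀ (norm_nonneg _) (norm_nonneg _)] at hx hy
  rw [norm_sub_sq_real, norm_sub_sq_real] at hx hy
  simp only [inner_sub_left, inner_sub_right] at *
  linarith

theorem eq_of_add_mem_voronoiCell_smul {A : Set E} {a b x y : E} {c : ℝ} (hc₀ : 0 < c)
    (hc₁ : c < 1) (ha : a ∈ A) (hb : b ∈ A) (hx : x ∈ voronoiCell (c • A) (c • a))
    (hy : y ∈ voronoiCell (c • A) (c • b)) (h : (1 - c) • a + x = (1 - c) • b + y) : a = b := by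
  have hxy : x - y = (1 - c) • (b - a) := by
    rw [smul_sub]; linear_combination (norm := module) h
  have key := inner_sub_sub_nonneg_of_dist_le (hx _ (smul_mem_smul_set hb))
    (hy _ (smul_mem_smul_set ha))
  rw [hxy, ← smul_sub, show a - b = (-1 : ℝ) • (b - a) by module, smul_smul,
    real_inner_smul_left, real_inner_smul_right, real_inner_self_eq_norm_sq] at key
  have : ‖b - a‖ ^ 2 ≤ 0 := by nlinarith [mul_pos hc₀ (sub_pos.mpr hc₁)]
  simpa [sub_eq_zero, eq_comm] using this

theorem add_mem_ball_of_mem_voronoiCell_smul {A : Set E} {a x : E} {c r : ℝ}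
    (hx : x ∈ thickening r (c • A)) (hcell : x ∈ voronoiCell (c • A) (c • a)) :
    (1 - c) • a + x ∈ ball a r := by
  have : dist ((1 - c) • a + x) a = dist x (c • a) := by
    rw [dist_eq_norm, dist_eq_norm]; congr 1; module
  rw [mem_ball, this]
  exact dist_lt_of_mem_thickening_of_mem_voronoiCell hx hcell

variable [MeasurableSpace E] (μ : Measure E) [μ.IsAddLeftInvariant]

theorem measure_thickening_smul_le_of_pos_of_lt_one [BorelSpace E] {A : Set E} (hA : A.Finite)
    {c : ℝ} (hc₀ : 0 < c) (hc₁ : c < 1) (r : ℝ) : μ (thickening r (c • A)) ≤ μ (thickening r A) := by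
  have : Countable A := hA.countable.to_subtype
  refine measure_le_of_pairwise_disjoint_vadd μ (fun a : A => (1 - c) • (a : E))
    (S := fun a : A => thickening r (c • A) ∩ voronoiCell (c • A) (c • (a : E)))
    (fun a => isOpen_thickening.measurableSet.inter (isClosed_voronoiCell _ _).measurableSet)
    ?cover ?disjoint ?subset
  case cover =>
    intro x hx
    obtain ⟨-, ⟨a, ha, rfl⟩, -⟩ := mem_thickening_iff.mp hx
    obtain ⟨-, ⟨a, ha, rfl⟩, hcell⟩ :=
      exists_mem_voronoiCell (hA.smul_set : (c • A).Finite) ⟨_, smul_mem_smul_set ha⟩ x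
    exact mem_iUnion.mpr ⟨⟨a, ha⟩, hx, hcell⟩
  case disjoint =>
    rintro ⟨a, ha⟩ ⟨b, hb⟩ hab
    refine disjoint_left.mpr ?_
    rintro _ ⟨x, ⟨-, hx⟩, rfl⟩ ⟨y, ⟨-, hy⟩, hxy⟩
    exact hab (Subtype.ext (eq_of_add_mem_voronoiCell_smul hc₀ hc₁ ha hb hx hy hxy.symm))
  case subset =>
    rintro ⟨a, ha⟩ _ ⟨x, ⟨hx, hcell⟩, rfl⟩
    exact ball_subset_thickening ha r (add_mem_ball_of_mem_voronoiCell_smul hx hcell)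

theorem measure_thickening_zero_smul_le {A : Set E} (hA : A.Nonempty) (r : ℝ) :
    μ (thickening r ((0 : ℝ) • A)) ≤ μ (thickening r A) := by
  obtain ⟨a, ha⟩ := hA
  calc μ (thickening r ((0 : ℝ) • A)) = μ (a +ᵥ ball (0 : E) r) := by
        rw [zero_smul_set ⟨a, ha⟩, measure_vadd, ← thickening_singleton]
        rfl
    _ ≤ μ (thickening r A) := by
        rw [vadd_ball, vadd_eq_add, add_zero]
        exact measure_mono (ball_subset_thickening ha r)

theorem measure_thickening_smul_le [BorelSpace E] {A : Set E} (hA : A.Finite) {c : ℝ}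
    (hc₀ : 0 ≤ c) (hc₁ : c ≤ 1) (r : ℝ) : μ (thickening r (c • A)) ≤ μ (thickening r A) := by
  rcases A.eq_empty_or_nonempty with rfl | hne
  · simp
  rcases hc₀.eq_or_lt with rfl | hc₀
  · exact measure_thickening_zero_smul_le μ hne r
  rcases hc₁.eq_or_lt with rfl | hc₁
  · rw [one_smul]
  exact measure_thickening_smul_le_of_pos_of_lt_one μ hA hc₀ hc₁ r

end Dilation

theorem thick_eq_thickening {d : ℕ} (r : ℝ) (A : Set (EuclideanSpace ℝ (Fin d))) :
    thick r A = thickening r A := by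
  ext x
  simp only [thick, mem_thickening_iff, mem_ofPred_eq]

theorem volume_thickening_dilation_le_of_finite_general (d : ℕ)
    (A : Set (EuclideanSpace ℝ (Fin d))) (hA : A.Finite) (r : ℝ)
    (c : ℝ) (hc₀ : 0 ≤ c) (hc₁ : c ≤ 1) :
    volume (thick r (c • A)) ≤ volume (thick r A) := by
  rw [thick_eq_thickening, thick_eq_thickening]
  exact measure_thickening_smul_le volume hA hc₀ hc₁ r

/-- For a finite set `A ⊆ ℝ^d`, `r > 0` and `c ∈ [0,1]`,
the volume of the `r`-thickening of the dilated set is at most that of `A`: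
`|B_r(c·A)| ≤ |B_r(A)|`. -/
theorem volume_thickening_dilation_le_of_finite (d : ℕ) (hd : 1 ≤ d)
    (A : Set (EuclideanSpace ℝ (Fin d))) (hA : A.Finite) (r : ℝ) (hr : 0 < r)
    (c : ℝ) (hc₀ : 0 ≤ c) (hc₁ : c ≤ 1) :
    volume (thick r (c • A)) ≤ volume (thick r A) :=
  volume_thickening_dilation_le_of_finite_general d A hA r c hc₀ hc₁
end

section
/- Let d ≥ 1, let A, I ⊆ ℝ^d be sets, let r > 0, 0 < ε < r and c ∈ [0,1]. If B_{r−ε}(A) ⊆ B_r(I), then B_{r−ε}(c·A) ⊆ B_r(c·I). -/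
open Pointwise

/-- For `A, I ⊆ ℝ^d`, `r > 0`, `0 < ε < r` and `c ∈ [0,1]`,
if `B_{r−ε}(A) ⊆ B_r(I)` then `B_{r−ε}(c·A) ⊆ B_r(c·I)`. -/
theorem thickening_dilation_subset (d : ℕ) (hd : 1 ≤ d)
    (A I : Set (EuclideanSpace ℝ (Fin d))) (r ε : ℝ) (hr : 0 < r)
    (hε : 0 < ε) (hεr : ε < r) (c : ℝ) (hc₀ : 0 ≤ c) (hc₁ : c ≤ 1)
    (h : thick (r - ε) A ⊆ thick r I) :
    thick (r - ε) (c • A) ⊆ thick r (c • I) := by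
  rintro x ⟨ca, ⟨a, ha, rfl⟩, hxa⟩
  set z : EuclideanSpace ℝ (Fin d) := x - c • a + a with hz
  have hza : dist z a < r - ε := by
    simpa [hz, dist_eq_norm] using hxa
  obtain ⟨i, hi, hzi⟩ := h ⟨a, ha, hza⟩
  refine ⟨c • i, ⟨i, hi, rfl⟩, ?_⟩
  have key : x - c • i = c • (z - i) + (1 - c) • (z - a) := by
    simp [hz, smul_sub, sub_smul]
    abel
  have hb : dist x (c • i) ≤ c * ‖z - i‖ + (1 - c) * ‖z - a‖ := by
    rw [dist_eq_norm, key]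
    calc ‖c • (z - i) + (1 - c) • (z - a)‖
        ≤ ‖c • (z - i)‖ + ‖(1 - c) • (z - a)‖ := norm_add_le _ _
      _ = c * ‖z - i‖ + (1 - c) * ‖z - a‖ := by
          rw [norm_smul, norm_smul, Real.norm_eq_abs, Real.norm_eq_abs,
            abs_of_nonneg hc₀, abs_of_nonneg (by linarith)]
  have h1 : ‖z - i‖ < r := by rwa [dist_eq_norm] at hzi
  have h2 : ‖z - a‖ < r - ε := by rwa [dist_eq_norm] at hza
  have h3 : (0:ℝ) ≤ ‖z - i‖ := norm_nonneg _
  have h4 : (0:ℝ) ≤ ‖z - a‖ := norm_nonneg _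
  rcases eq_or_lt_of_le hc₁ with hc | hc
  · subst hc; simpa using lt_of_le_of_lt hb (by linarith)
  · nlinarith [mul_nonneg hc₀ (sub_pos.mpr h1).le,
      mul_pos (sub_pos.mpr hc) (sub_pos.mpr h2)]
end
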